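/- arXiv:math/0112090 — 7 statements merged into one kernel-verified Lean document; each statement's English description precedes it below -/
import Mathlib

section
/- Let n ≥ 1 and let c_1 ≤ c_2 ≤ … ≤ c_{n+1} be positive integers with gcd(c_1, …, c_{n+1}) = 1, and set c = gcd(c_n, c_{n+1}). If (c / (c_n · c_{n+1})) · (c_1 + ⋯ + c_{n+1}) = n + 1 (as rational numbers), then c_i = 1 for every i. -/
/-- Equality case: if the weights `c 1 ≤ ⋯ ≤ c (n+1)` are positive integers with
gcd one and `(gcd (c n) (c (n+1)) / (c n * c (n+1))) * (c 1 + ⋯ + c (n+1)) = n + 1`,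
then every weight equals `1`. -/
theorem wps_anticanonical_degree_eq (n : ℕ) (hn : 1 ≤ n) (c : ℕ → ℕ)
    (hpos : ∀ i ∈ Finset.Icc 1 (n + 1), 0 < c i)
    (hmono : ∀ i j, 1 ≤ i → i ≤ j → j ≤ n + 1 → c i ≤ c j)
    (hgcd : (Finset.Icc 1 (n + 1)).gcd c = 1)
    (heq : ((Nat.gcd (c n) (c (n + 1)) : ℚ) / ((c n : ℚ) * (c (n + 1) : ℚ))) *
      (∑ i ∈ Finset.Icc 1 (n + 1), (c i : ℚ)) = (n : ℚ) + 1) :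
    ∀ i ∈ Finset.Icc 1 (n + 1), c i = 1 := by
  have hn1 : n ∈ Finset.Icc 1 (n + 1) := by simp [Finset.mem_Icc]; omega
  have hn2 : n + 1 ∈ Finset.Icc 1 (n + 1) := by simp [Finset.mem_Icc]
  have ha : 0 < c n := hpos _ hn1
  have hb : 0 < c (n + 1) := hpos _ hn2
  set a := c n with hadef
  set b := c (n + 1) with hbdef
  set g := Nat.gcd a b with hg
  have hgpos : 0 < g := Nat.gcd_pos_of_pos_left _ ha
  set L := Nat.lcm a b with hL
  have hLpos : 0 < L := Nat.lcm_pos ha hb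
  have hbL : b ≤ L := Nat.le_of_dvd hLpos (Nat.dvd_lcm_right a b)
  have hgl : g * L = a * b := Nat.gcd_mul_lcm a b
  -- Turn the rational hypothesis into a natural-number equation
  have hS : (∑ i ∈ Finset.Icc 1 (n + 1), c i) = (n + 1) * L := by
    have h1 : (g : ℚ) * (∑ i ∈ Finset.Icc 1 (n + 1), (c i : ℚ))
        = ((n : ℚ) + 1) * ((a : ℚ) * b) := by
      have hane : (a : ℚ) ≠ 0 := by exact_mod_cast ha.ne'
      have hbne : (b : ℚ) ≠ 0 := by exact_mod_cast hb.ne'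
      field_simp at heq
      linarith [heq]
    have h2 : g * (∑ i ∈ Finset.Icc 1 (n + 1), c i) = (n + 1) * (a * b) := by
      exact_mod_cast (by push_cast; linarith [h1] :
        ((g * (∑ i ∈ Finset.Icc 1 (n + 1), c i) : ℕ) : ℚ) = (((n + 1) * (a * b) : ℕ) : ℚ))
    have h3 : g * (∑ i ∈ Finset.Icc 1 (n + 1), c i) = g * ((n + 1) * L) := by
      rw [h2, ← hgl]; ring
    exact Nat.eq_of_mul_eq_mul_left hgpos h3
  -- every c i ≤ L
  have hle : ∀ i ∈ Finset.Icc 1 (n + 1), c i ≤ L := by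
    intro i hi
    rw [Finset.mem_Icc] at hi
    exact le_trans (hmono i (n + 1) hi.1 hi.2 le_rfl) hbL
  -- so by the sum identity, every c i = L
  have hall : ∀ i ∈ Finset.Icc 1 (n + 1), c i = L := by
    by_contra hcon
    push_neg at hcon
    obtain ⟨j, hj, hjne⟩ := hcon
    have hjlt : c j < L := lt_of_le_of_ne (hle j hj) hjne
    have hlt : (∑ i ∈ Finset.Icc 1 (n + 1), c i) < ∑ i ∈ Finset.Icc 1 (n + 1), L :=
      Finset.sum_lt_sum hle ⟨j, hj, hjlt⟩
    rw [Finset.sum_const, Nat.card_Icc] at hlt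
    simp only [Nat.add_sub_cancel, smul_eq_mul] at hlt
    omega
  -- hence L divides the gcd, forcing L = 1
  have hLdvd : L ∣ (Finset.Icc 1 (n + 1)).gcd c :=
    Finset.dvd_gcd fun i hi => (hall i hi) ▸ dvd_refl L
  rw [hgcd] at hLdvd
  have : L = 1 := Nat.eq_one_of_dvd_one hLdvd
  intro i hi
  rw [hall i hi, this]
end

section
/- Let c_1 ≤ c_2 ≤ c_3 be positive integers with gcd(c_2, c_3) = 1 and (c_1, c_2, c_3) ≠ (1, 1, 1). If (c_1 + c_2 + c_3) / (c_2 · c_3) = 2 (as rational numbers), then (c_1, c_2, c_3) = (1, 1, 2). -/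
/-- For positive integers `c₁ ≤ c₂ ≤ c₃` with `gcd (c₂, c₃) = 1` and
`(c₁, c₂, c₃) ≠ (1, 1, 1)`, if `(c₁ + c₂ + c₃) / (c₂ * c₃) = 2` then
`(c₁, c₂, c₃) = (1, 1, 2)`. -/
theorem wps_surface_degree_eq_two (c₁ c₂ c₃ : ℕ)
    (hc₁ : 0 < c₁) (hc₂ : 0 < c₂) (hc₃ : 0 < c₃)
    (h₁₂ : c₁ ≤ c₂) (h₂₃ : c₂ ≤ c₃)
    (hcop : Nat.gcd c₂ c₃ = 1)
    (hne : (c₁, c₂, c₃) ≠ (1, 1, 1))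
    (heq : ((c₁ : ℚ) + c₂ + c₃) / ((c₂ : ℚ) * c₃) = 2) :
    (c₁, c₂, c₃) = (1, 1, 2) := by
  have hne' : ((c₂ : ℚ) * c₃) ≠ 0 := by positivity
  rw [div_eq_iff hne'] at heq
  have key : c₁ + c₂ + c₃ = 2 * (c₂ * c₃) := by exact_mod_cast heq
  have h2 : c₂ = 1 := by nlinarith
  subst h2
  simp at *
  omega
end

section
/- Let n ≥ 3 and l ≥ 2 be integers, and consider the nondecreasing sequence of n+1 positive integers given by c_1 = c_2 = l − 1 and c_3 = ⋯ = c_{n+1} = l. Then gcd(c_n, c_{n+1}) = l and (gcd(c_n, c_{n+1}) / (c_n · c_{n+1})) · (c_1 + ⋯ + c_{n+1}) = n + 1 − 2/l as rational numbers; in particular, if l ≥ 3 this quantity is strictly greater than n. -/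
/-- For `n ≥ 3`, `l ≥ 2` and weights `c₁ = c₂ = l - 1`, `c₃ = ⋯ = c_{n+1} = l`
(the weighted projective space `P(l-1, l-1, l, …, l)`), one has
`gcd (c n) (c (n+1)) = l` and
`(gcd (c n) (c (n+1)) / (c n * c (n+1))) * (c 1 + ⋯ + c (n+1)) = n + 1 - 2/l`;
in particular this quantity is `> n` whenever `l ≥ 3`. -/
theorem wps_example_close_to_n_plus_one (n l : ℕ) (hn : 3 ≤ n) (hl : 2 ≤ l)
    (c : ℕ → ℕ) (hc : ∀ i, c i = if i ≤ 2 then l - 1 else l) :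
    Nat.gcd (c n) (c (n + 1)) = l ∧
    ((Nat.gcd (c n) (c (n + 1)) : ℚ) / ((c n : ℚ) * (c (n + 1) : ℚ))) *
        (∑ i ∈ Finset.Icc 1 (n + 1), (c i : ℚ)) = (n : ℚ) + 1 - 2 / (l : ℚ) ∧
    (3 ≤ l → (n : ℚ) <
      ((Nat.gcd (c n) (c (n + 1)) : ℚ) / ((c n : ℚ) * (c (n + 1) : ℚ))) *
        (∑ i ∈ Finset.Icc 1 (n + 1), (c i : ℚ))) := by
  have hcn : c n = l := by rw [hc]; simp [Nat.not_le.mpr (by omega : 2 < n)]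
  have hcn1 : c (n + 1) = l := by rw [hc]; simp [Nat.not_le.mpr (by omega : 2 < n + 1)]
  have hgcd : Nat.gcd (c n) (c (n + 1)) = l := by rw [hcn, hcn1, Nat.gcd_self]
  have hl0 : (l : ℚ) ≠ 0 := by positivity
  have hsum : (∑ i ∈ Finset.Icc 1 (n + 1), (c i : ℚ)) = ((n : ℚ) + 1) * l - 2 := by
    have hsplit : Finset.Icc 1 (n + 1) = Finset.Icc 1 2 ∪ Finset.Icc 3 (n + 1) := by
      ext i; simp [Finset.mem_Icc, Finset.mem_union]; omega
    rw [hsplit, Finset.sum_union (by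
      rw [Finset.disjoint_left]; intro a ha hb
      simp [Finset.mem_Icc] at ha hb; omega)]
    have h1 : ∑ i ∈ Finset.Icc 1 2, (c i : ℚ) = 2 * ((l : ℚ) - 1) := by
      rw [show Finset.Icc 1 2 = {1, 2} from rfl]
      rw [Finset.sum_insert (by decide), Finset.sum_singleton, hc, hc]
      simp only [if_pos (by omega : (1:ℕ) ≤ 2), if_pos (le_refl 2)]
      have : ((l - 1 : ℕ) : ℚ) = (l : ℚ) - 1 := by
        push_cast [hl]; ring_nf; rw [Nat.cast_sub (by omega)]; push_cast; ring
      rw [this]; ring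
    have h2 : ∑ i ∈ Finset.Icc 3 (n + 1), (c i : ℚ) = ((n : ℚ) - 1) * l := by
      have : ∀ i ∈ Finset.Icc 3 (n + 1), (c i : ℚ) = (l : ℚ) := by
        intro i hi; simp [Finset.mem_Icc] at hi
        rw [hc]; simp [Nat.not_le.mpr (by omega : 2 < i)]
      rw [Finset.sum_congr rfl this, Finset.sum_const, Nat.card_Icc]
      have : n + 1 + 1 - 3 = n - 1 := by omega
      rw [this, nsmul_eq_mul, Nat.cast_sub (by omega)]
      push_cast; ring
    rw [h1, h2]; ring
  refine ⟨hgcd, ?_, ?_⟩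
  · rw [hgcd, hcn, hcn1, hsum]
    field_simp
  · intro hl3
    rw [hgcd, hcn, hcn1, hsum]
    have : ((Nat.gcd l l : ℚ)) = (l:ℚ) := by rw [Nat.gcd_self]
    have hlpos : (0:ℚ) < l := by positivity
    rw [div_mul_eq_mul_div, lt_div_iff₀ (by positivity)]
    have h3 : (3:ℚ) ≤ l := by exact_mod_cast hl3
    nlinarith [hlpos, h3]
end

section
/- Let n ≥ 2 be an integer. For every rational number ε > 0 there exist positive integers c_1 ≤ c_2 ≤ … ≤ c_{n+1} with gcd(c_1, …, c_{n+1}) = 1 such that 0 < (gcd(c_n, c_{n+1}) / (c_n · c_{n+1})) · (c_1 + ⋯ + c_{n+1}) < ε. In fact, the weights c_1 = ⋯ = c_{n−1} = 1, c_n = l − 1, c_{n+1} = l give the value (n + 2l − 2)/(l(l − 1)), which tends to 0 as l → ∞. -/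
/-!
Since `l - 1` and `l` are coprime, the weights `(1, …, 1, l - 1, l)` give degree
`(n + 2l - 2) / (l (l - 1)) ≤ 2 (n + 2) / l`, which is below any `ε > 0` once `l` is large.
-/

open Filter Finset Topology

/-- `-K_P · V(τ)` for `P = P(c 1, …, c (n + 1))`. -/
def anticanonicalDegree (n : ℕ) (c : ℕ → ℕ) : ℚ :=
  (Nat.gcd (c n) (c (n + 1)) : ℚ) / ((c n : ℚ) * (c (n + 1) : ℚ)) *
    ∑ i ∈ Icc 1 (n + 1), (c i : ℚ)

theorem anticanonicalDegree_pos {n : ℕ} {c : ℕ → ℕ} (hn : 1 ≤ n)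
    (hc : ∀ i ∈ Icc 1 (n + 1), 0 < c i) : 0 < anticanonicalDegree n c := by
  have hcn : 0 < c n := hc n (mem_Icc.2 ⟨hn, by omega⟩)
  have hcn' : 0 < c (n + 1) := hc (n + 1) (mem_Icc.2 ⟨by omega, le_rfl⟩)
  have hsum : 0 < ∑ i ∈ Icc 1 (n + 1), (c i : ℚ) :=
    sum_pos (fun i hi => by exact_mod_cast hc i hi) ⟨n, mem_Icc.2 ⟨hn, by omega⟩⟩
  have hgcd : 0 < Nat.gcd (c n) (c (n + 1)) := Nat.gcd_pos_of_pos_left _ hcn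
  unfold anticanonicalDegree
  positivity

theorem sum_Icc_eq_of_eq_one {n : ℕ} {c : ℕ → ℕ} (hn : 1 ≤ n)
    (hc : ∀ i, 1 ≤ i → i ≤ n - 1 → c i = 1) :
    ∑ i ∈ Icc 1 (n + 1), (c i : ℚ) = ((n : ℚ) - 1) + c n + c (n + 1) := by
  have hones : ∀ i ∈ Ico 1 n, (c i : ℚ) = 1 := fun i hi => by
    obtain ⟨hi1, hin⟩ := mem_Ico.1 hi
    rw [hc i hi1 (by omega), Nat.cast_one]
  rw [← Ico_add_one_right_eq_Icc, sum_Ico_succ_top (by omega), sum_Ico_succ_top hn,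
    sum_congr rfl hones]
  simp [Nat.cast_sub hn]

theorem anticanonicalDegree_eq {n l : ℕ} {c : ℕ → ℕ} (hn : 1 ≤ n) (hl : 2 ≤ l)
    (hc : ∀ i, 1 ≤ i → i ≤ n - 1 → c i = 1) (hcn : c n = l - 1) (hcn' : c (n + 1) = l) :
    anticanonicalDegree n c = ((n : ℚ) + 2 * (l : ℚ) - 2) / ((l : ℚ) * ((l : ℚ) - 1)) := by
  obtain ⟨m, rfl⟩ : ∃ m, l = m + 1 := ⟨l - 1, by omega⟩
  rw [Nat.add_sub_cancel] at hcn
  have hcop : Nat.gcd m (m + 1) = 1 := Nat.coprime_self_add_right.2 (Nat.coprime_one_right m)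
  have hm : (m : ℚ) ≠ 0 := by exact_mod_cast (by omega : m ≠ 0)
  rw [anticanonicalDegree, sum_Icc_eq_of_eq_one hn hc, hcn, hcn', hcop]
  push_cast
  rw [add_sub_cancel_right]
  field_simp
  ring

theorem tendsto_degree_atTop (n : ℕ) :
    Tendsto (fun l : ℕ => ((n : ℚ) + 2 * (l : ℚ) - 2) / ((l : ℚ) * ((l : ℚ) - 1)))
      atTop (𝓝 0) := by
  refine tendsto_of_tendsto_of_tendsto_of_le_of_le' tendsto_const_nhds
    (tendsto_const_div_atTop_nhds_zero_nat (2 * ((n : ℚ) + 2))) ?_ ?_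
  all_goals
    filter_upwards [eventually_ge_atTop 2] with l hl
    have hl : (2 : ℚ) ≤ l := by exact_mod_cast hl
  · exact div_nonneg (by linarith) (by nlinarith)
  · rw [div_le_div_iff₀ (by nlinarith) (by linarith)]
    have hn : (0 : ℚ) ≤ n := n.cast_nonneg
    nlinarith [mul_nonneg (mul_nonneg hn (sub_nonneg.2 hl)) (by linarith : (0 : ℚ) ≤ l)]

def smallDegreeWeights (n l : ℕ) (i : ℕ) : ℕ :=
  if i < n then 1 else if i = n then l - 1 else l

section smallDegreeWeights

variable {n l : ℕ}

theorem smallDegreeWeights_pos (hl : 2 ≤ l) (i : ℕ) : 0 < smallDegreeWeights n l i := by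
  unfold smallDegreeWeights
  split_ifs <;> omega

theorem smallDegreeWeights_monotone (hl : 2 ≤ l) : Monotone (smallDegreeWeights n l) := by
  intro i j hij
  unfold smallDegreeWeights
  split_ifs <;> omega

theorem gcd_smallDegreeWeights (hn : 2 ≤ n) :
    (Icc 1 (n + 1)).gcd (smallDegreeWeights n l) = 1 := by
  have h1 : smallDegreeWeights n l 1 = 1 := if_pos (by omega)
  have hdvd := gcd_dvd (f := smallDegreeWeights n l)
    (mem_Icc.2 ⟨le_rfl, by omega⟩ : 1 ∈ Icc 1 (n + 1))
  rw [h1] at hdvd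
  exact Nat.dvd_one.mp hdvd

theorem anticanonicalDegree_smallDegreeWeights (hn : 1 ≤ n) (hl : 2 ≤ l) :
    anticanonicalDegree n (smallDegreeWeights n l) =
      ((n : ℚ) + 2 * (l : ℚ) - 2) / ((l : ℚ) * ((l : ℚ) - 1)) :=
  anticanonicalDegree_eq hn hl (fun i _ hi => if_pos (by omega)) (by simp [smallDegreeWeights])
    (by simp [smallDegreeWeights])

end smallDegreeWeights

/-- For `n ≥ 2`: (a) for every rational `ε > 0` there are positive weights
`c 1 ≤ ⋯ ≤ c (n+1)` with gcd one whose anticanonical degree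
`(gcd (c n) (c (n+1)) / (c n * c (n+1))) * (c 1 + ⋯ + c (n+1))` lies in `(0, ε)`;
(b) the weights `c 1 = ⋯ = c (n-1) = 1`, `c n = l - 1`, `c (n+1) = l` (with `l ≥ 2`)
give the value `(n + 2l - 2) / (l (l - 1))`; and (c) that value tends to `0`
as `l → ∞`. -/
theorem wps_degree_arbitrarily_small (n : ℕ) (hn : 2 ≤ n) :
    (∀ ε : ℚ, 0 < ε → ∃ c : ℕ → ℕ,
      (∀ i ∈ Finset.Icc 1 (n + 1), 0 < c i) ∧
      (∀ i j, 1 ≤ i → i ≤ j → j ≤ n + 1 → c i ≤ c j) ∧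
      (Finset.Icc 1 (n + 1)).gcd c = 1 ∧
      0 < ((Nat.gcd (c n) (c (n + 1)) : ℚ) / ((c n : ℚ) * (c (n + 1) : ℚ))) *
          (∑ i ∈ Finset.Icc 1 (n + 1), (c i : ℚ)) ∧
      ((Nat.gcd (c n) (c (n + 1)) : ℚ) / ((c n : ℚ) * (c (n + 1) : ℚ))) *
          (∑ i ∈ Finset.Icc 1 (n + 1), (c i : ℚ)) < ε) ∧
    (∀ l : ℕ, 2 ≤ l → ∀ c : ℕ → ℕ,
      (∀ i, 1 ≤ i → i ≤ n - 1 → c i = 1) → c n = l - 1 → c (n + 1) = l →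
      ((Nat.gcd (c n) (c (n + 1)) : ℚ) / ((c n : ℚ) * (c (n + 1) : ℚ))) *
          (∑ i ∈ Finset.Icc 1 (n + 1), (c i : ℚ)) =
        ((n : ℚ) + 2 * (l : ℚ) - 2) / ((l : ℚ) * ((l : ℚ) - 1))) ∧
    Filter.Tendsto (fun l : ℕ => ((n : ℚ) + 2 * (l : ℚ) - 2) / ((l : ℚ) * ((l : ℚ) - 1)))
      Filter.atTop (nhds 0) := by
  refine ⟨fun ε hε => ?_, fun l hl c => anticanonicalDegree_eq (by omega) hl,
    tendsto_degree_atTop n⟩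
  obtain ⟨l, hlε, hl⟩ :=
    (((tendsto_degree_atTop n).eventually (gt_mem_nhds hε)).and (eventually_ge_atTop 2)).exists
  refine ⟨smallDegreeWeights n l, fun i _ => smallDegreeWeights_pos hl i,
    fun i j _ hij _ => smallDegreeWeights_monotone hl hij, gcd_smallDegreeWeights hn,
    anticanonicalDegree_pos (by omega) fun i _ => smallDegreeWeights_pos hl i, ?_⟩
  exact (anticanonicalDegree_smallDegreeWeights (by omega) hl).trans_lt hlε
end

section
/- Let n ≥ 1 and let v_1, …, v_{n+1} ∈ ℚ^n be vectors such that v_1 + ⋯ + v_{n+1} = 0 and every n of them are linearly independent over ℚ. Let d_1, …, d_{n+1} be positive integers with gcd(d_1, …, d_{n+1}) = 1, set e_i = (1/d_i)·v_i, and let N be the ℤ-submodule of ℚ^n generated by e_1, …, e_{n+1}. Then, for each i, the element e_i is primitive in N (i.e., there is no integer m ≥ 2 and x ∈ N with e_i = m·x) if and only if gcd(d_1, …, d_{i−1}, d_{i+1}, …, d_{n+1}) = 1. -/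
/-- Let `v 0, …, v n ∈ ℚⁿ` sum to zero, with every `n` of them linearly independent
over `ℚ`. Let `d i` be positive integers with gcd one, set `e i = (1 / d i) • v i`,
and let `N` be the ℤ-submodule of `ℚⁿ` generated by the `e i`. Then `e i` is
primitive in `N` (no `m ≥ 2` and `x ∈ N` with `e i = m • x`) if and only if the
gcd of the `d j` for `j ≠ i` equals `1`. -/
theorem wps_ray_generator_primitive_iff (n : ℕ) (hn : 1 ≤ n)
    (v : Fin (n + 1) → (Fin n → ℚ))
    (hsum : ∑ i, v i = 0)
    (hindep : ∀ j : Fin (n + 1),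
      LinearIndependent ℚ (fun i : {i : Fin (n + 1) // i ≠ j} => v i))
    (d : Fin (n + 1) → ℕ) (hd : ∀ i, 0 < d i)
    (hgcd : Finset.univ.gcd d = 1)
    (e : Fin (n + 1) → (Fin n → ℚ)) (he : ∀ i, e i = ((d i : ℚ))⁻¹ • v i)
    (N : Submodule ℤ (Fin n → ℚ)) (hN : N = Submodule.span ℤ (Set.range e))
    (i : Fin (n + 1)) :
    (¬ ∃ m : ℤ, 2 ≤ m ∧ ∃ x ∈ N, e i = m • x) ↔
      (Finset.univ.erase i).gcd d = 1 := by
  subst hN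
  have hdq : ∀ j, (d j : ℚ) ≠ 0 := fun j => Nat.cast_ne_zero.2 (hd j).ne'
  have hvi : v i = -∑ j ∈ Finset.univ.erase i, v j := by
    have h := Finset.add_sum_erase Finset.univ v (Finset.mem_univ i)
    rw [hsum] at h
    exact eq_neg_of_add_eq_zero_left h
  -- key algebraic identity
  have key : ∀ (m : ℤ) (a : Fin (n + 1) → ℤ),
      e i - m • (∑ j, a j • e j)
        = ∑ j ∈ Finset.univ.erase i,
            ((((m * a i - 1 : ℤ) : ℚ) * (d i : ℚ)⁻¹
              - ((m * a j : ℤ) : ℚ) * (d j : ℚ)⁻¹)) • v j := by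
    intro m a
    funext k
    have hvik : v i k = -∑ j ∈ Finset.univ.erase i, v j k := by
      have h := congrFun hvi k
      simpa using h
    simp only [he, Pi.sub_apply, Pi.smul_apply, Finset.sum_apply, smul_eq_mul,
      zsmul_eq_mul, Pi.mul_apply, Pi.intCast_apply]
    rw [← Finset.add_sum_erase Finset.univ _ (Finset.mem_univ i), hvik]
    rw [show (∑ j ∈ Finset.univ.erase i,
        ((((m * a i - 1 : ℤ) : ℚ) * (d i : ℚ)⁻¹ - ((m * a j : ℤ) : ℚ) * (d j : ℚ)⁻¹)) * v j k)
        = (((m : ℚ) * (a i : ℚ) - 1) * (d i : ℚ)⁻¹) * (∑ j ∈ Finset.univ.erase i, v j k)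
          - (m : ℚ) * ∑ j ∈ Finset.univ.erase i, (a j : ℚ) * ((d j : ℚ)⁻¹ * v j k) from by
      rw [Finset.mul_sum, Finset.mul_sum, ← Finset.sum_sub_distrib]
      exact Finset.sum_congr rfl fun j _ => by push_cast; ring]
    ring
  -- extraction from linear independence
  have hind : ∀ c : Fin (n + 1) → ℚ,
      (∑ j ∈ Finset.univ.erase i, c j • v j = 0) → ∀ j, j ≠ i → c j = 0 := by
    intro c hc j hj
    have h0 : ∑ j : {j : Fin (n + 1) // j ≠ i}, c j • v j = 0 := by
      rw [← Finset.sum_subtype (Finset.univ.erase i) (by simp) (fun j => c j • v j)]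
      exact hc
    exact (Fintype.linearIndependent_iff.mp (hindep i)) (fun j => c j.1) h0 ⟨j, hj⟩
  have herase_ne : (Finset.univ.erase i).Nonempty := by
    rw [← Finset.card_pos, Finset.card_erase_of_mem (Finset.mem_univ i)]
    simp [Fintype.card_fin]
    omega
  have hgcd_split : Nat.gcd (d i) ((Finset.univ.erase i).gcd d) = 1 := by
    have h : (insert i (Finset.univ.erase i)).gcd d
        = GCDMonoid.gcd (d i) ((Finset.univ.erase i).gcd d) := Finset.gcd_insert
    rw [Finset.insert_erase (Finset.mem_univ i), hgcd] at h
    exact h.symm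
  constructor
  · -- primitive → gcd = 1
    intro hprim
    by_contra hgne
    apply hprim
    set g := (Finset.univ.erase i).gcd d with hgdef
    have hgpos : 0 < g := by
      obtain ⟨j, hj⟩ := herase_ne
      have hdvd : g ∣ d j := Finset.gcd_dvd hj
      exact Nat.pos_of_ne_zero fun h0 => by
        rw [h0] at hdvd
        exact absurd (Nat.eq_zero_of_zero_dvd hdvd) (hd j).ne'
    have hco : IsCoprime ((d i : ℤ)) ((g : ℤ)) := by
      rw [Int.isCoprime_iff_gcd_eq_one, Int.gcd_natCast_natCast]
      exact hgcd_split
    obtain ⟨u, t, hut⟩ := hco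
    set a : Fin (n + 1) → ℤ :=
      fun j => if j = i then t else -u * ((d j / g : ℕ) : ℤ) with hadef
    refine ⟨(g : ℤ), by exact_mod_cast by omega, ∑ j, a j • e j,
      Submodule.sum_smul_mem _ a (fun j _ => Submodule.subset_span ⟨j, rfl⟩), ?_⟩
    have h0 : e i - (g : ℤ) • (∑ j, a j • e j) = 0 := by
      rw [key]
      apply Finset.sum_eq_zero
      intro j hj
      have hji : j ≠ i := (Finset.mem_erase.mp hj).1
      have hdvd : g ∣ d j := Finset.gcd_dvd hj
      have hai : a i = t := by simp [hadef]
      have haj : a j = -u * ((d j / g : ℕ) : ℤ) := by simp [hadef, hji]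
      have hA : (g : ℤ) * a i - 1 = -u * (d i : ℤ) := by
        rw [hai]; linarith [hut]
      have hB : (g : ℤ) * a j = -u * (d j : ℤ) := by
        rw [haj]
        have : (g : ℤ) * ((d j / g : ℕ) : ℤ) = (d j : ℤ) := by
          exact_mod_cast congrArg (Nat.cast : ℕ → ℤ) (Nat.mul_div_cancel' hdvd)
        linear_combination -u * this
      have hcoef : ((((g : ℤ) * a i - 1 : ℤ) : ℚ) * (d i : ℚ)⁻¹
          - (((g : ℤ) * a j : ℤ) : ℚ) * (d j : ℚ)⁻¹) = 0 := by
        rw [hA, hB]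
        push_cast
        field_simp [hdq i, hdq j]
        ring
      rw [hcoef, zero_smul]
    exact sub_eq_zero.mp h0
  · -- gcd = 1 → primitive
    rintro hg ⟨m, hm, x, hx, hex⟩
    obtain ⟨a, ha⟩ := (Submodule.mem_span_range_iff_exists_fun ℤ).mp hx
    have h0 : e i - m • (∑ j, a j • e j) = 0 := by
      rw [ha]
      exact sub_eq_zero_of_eq hex
    rw [key] at h0
    have hc := hind _ h0
    have hdvd : ∀ j, j ≠ i → m ∣ (d j : ℤ) := by
      intro j hj
      have h1 := hc j hj
      have h1' : ((m * a i - 1 : ℤ) : ℚ) * (d i : ℚ)⁻¹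
          = ((m * a j : ℤ) : ℚ) * (d j : ℚ)⁻¹ := sub_eq_zero.mp h1
      have h2 : ((m * a i - 1 : ℤ) : ℚ) * (d j : ℚ) = ((m * a j : ℤ) : ℚ) * (d i : ℚ) := by
        field_simp [hdq i, hdq j] at h1'
        push_cast at h1' ⊢
        linear_combination h1'
      have h3 : (m * a i - 1) * (d j : ℤ) = (m * a j) * (d i : ℤ) := by
        exact_mod_cast h2
      have h4 : m ∣ (m * a i - 1) * (d j : ℤ) := ⟨a j * (d i : ℤ), by linear_combination h3⟩
      have hco : IsCoprime m (m * a i - 1) := ⟨a i, -1, by ring⟩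
      exact hco.dvd_of_dvd_mul_left h4
    have hmt : (m.toNat : ℤ) = m := Int.toNat_of_nonneg (by omega)
    have hdvd' : m.toNat ∣ (Finset.univ.erase i).gcd d := by
      apply Finset.dvd_gcd
      intro j hj
      have := hdvd j (Finset.mem_erase.mp hj).1
      rw [← hmt] at this
      exact_mod_cast this
    rw [hg] at hdvd'
    have : m.toNat = 1 := Nat.dvd_one.mp hdvd'
    omega
end

section
/- Let n ≥ 1 and let v_1, …, v_{n+1} ∈ ℤ^n be primitive vectors (each having gcd of coordinates equal to 1). Let a_1 ≤ a_2 ≤ … ≤ a_{n+1} be positive integers with gcd(a_1, …, a_{n+1}) = 1 such that a_1·v_1 + ⋯ + a_{n+1}·v_{n+1} = 0 and a_k divides a_{n+1} for every k. If a_1 + ⋯ + a_{n+1} > n · a_{n+1}, then a_i = 1 for every i. -/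
/-- Let `v 0, …, v n ∈ ℤⁿ` be primitive vectors and `a 0 ≤ ⋯ ≤ a n` positive
integers with gcd one such that `∑ a i • v i = 0` and each `a k` divides the
largest weight `a n`. If `a 0 + ⋯ + a n > n * a n`, then every `a i` equals `1`. -/
theorem fano_picard_one_weights_eq_one (n : ℕ) (hn : 1 ≤ n)
    (v : Fin (n + 1) → (Fin n → ℤ))
    (hprim : ∀ i, Finset.univ.gcd (fun j => (v i j).natAbs) = 1)
    (a : Fin (n + 1) → ℕ) (hpos : ∀ i, 0 < a i) (hmono : Monotone a)
    (hgcd : Finset.univ.gcd a = 1)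
    (hsum : ∑ i, (a i : ℤ) • v i = 0)
    (hdvd : ∀ k, a k ∣ a (Fin.last n))
    (hgt : n * a (Fin.last n) < ∑ i, a i) :
    ∀ i, a i = 1 := by
  set A := a (Fin.last n) with hA
  have hle : ∀ i, a i ≤ A := fun i => hmono (Fin.le_last i)
  -- key: any weight strictly below A is at most A/2
  have htwice : ∀ i, a i < A → 2 * a i ≤ A := by
    intro i hi
    obtain ⟨k, hk⟩ := hdvd i
    have hk2 : 2 ≤ k := by
      rcases Nat.lt_or_ge k 2 with h | h
      · interval_cases k <;> omega
      · exact h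
    calc 2 * a i = a i * 2 := by ring
    _ ≤ a i * k := Nat.mul_le_mul_left _ hk2
    _ = A := hk.symm
  -- at most one index with a i < A
  have hone : ∀ i j, i ≠ j → a i < A → a j < A → False := by
    intro i j hij hi hj
    have hsum1 : ∑ k ∈ (Finset.univ.erase i), a k + a i = ∑ k, a k :=
      Finset.sum_erase_add _ _ (Finset.mem_univ i)
    have hjmem : j ∈ Finset.univ.erase i := Finset.mem_erase.2 ⟨hij.symm, Finset.mem_univ j⟩
    have hsum2 : ∑ k ∈ ((Finset.univ.erase i).erase j), a k + a j
        = ∑ k ∈ (Finset.univ.erase i), a k := Finset.sum_erase_add _ _ hjmem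
    have hcard : ((Finset.univ.erase i).erase j).card = n - 1 := by
      rw [Finset.card_erase_of_mem hjmem, Finset.card_erase_of_mem (Finset.mem_univ i),
        Finset.card_univ, Fintype.card_fin]
      omega
    have hbound : ∑ k ∈ ((Finset.univ.erase i).erase j), a k ≤ (n - 1) * A := by
      calc ∑ k ∈ ((Finset.univ.erase i).erase j), a k
          ≤ ∑ _k ∈ ((Finset.univ.erase i).erase j), A := Finset.sum_le_sum fun k _ => hle k
        _ = (n - 1) * A := by rw [Finset.sum_const, hcard, smul_eq_mul]
    have h2i := htwice i hi
    have h2j := htwice j hj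
    have hnA : n * A = (n - 1) * A + A := by
      have : n - 1 + 1 = n := Nat.succ_pred_eq_of_pos hn
      nlinarith [this]
    omega
  -- goal reduces to A = 1
  suffices hA1 : A = 1 by
    intro i
    have := hle i
    have := hpos i
    omega
  by_cases hall : ∀ j, a j = A
  · -- all weights equal A, so A divides the gcd = 1
    have : A ∣ Finset.univ.gcd a := Finset.dvd_gcd fun j _ => (hall j) ▸ dvd_refl A
    rw [hgcd] at this
    exact Nat.dvd_one.mp this
  · push_neg at hall
    obtain ⟨i0, hi0⟩ := hall
    have hi0lt : a i0 < A := lt_of_le_of_ne (hle i0) hi0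
    have hothers : ∀ j, j ≠ i0 → a j = A := by
      intro j hj
      by_contra hne
      exact hone i0 j (Ne.symm hj) hi0lt (lt_of_le_of_ne (hle j) hne)
    -- a i0 divides every a j, hence divides gcd = 1
    have hi0one : a i0 = 1 := by
      have : a i0 ∣ Finset.univ.gcd a := Finset.dvd_gcd fun j _ => by
        by_cases h : j = i0
        · exact h ▸ dvd_refl _
        · rw [hothers j h]; exact hdvd i0
      rw [hgcd] at this
      exact Nat.dvd_one.mp this
    -- vector equation: A divides every coordinate of v i0
    have hdvdcoord : ∀ c, (A : ℤ) ∣ v i0 c := by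
      intro c
      have h0 : ∑ i, (a i : ℤ) * v i c = 0 := by
        have := congrFun hsum c
        simpa [Finset.sum_apply] using this
      have hsplit : ∑ i ∈ Finset.univ.erase i0, (a i : ℤ) * v i c + (a i0 : ℤ) * v i0 c
          = ∑ i, (a i : ℤ) * v i c := Finset.sum_erase_add _ _ (Finset.mem_univ i0)
      have heq : v i0 c = -∑ i ∈ Finset.univ.erase i0, (a i : ℤ) * v i c := by
        rw [hi0one] at hsplit
        push_cast at hsplit
        linarith
      have hdvdsum : (A : ℤ) ∣ ∑ i ∈ Finset.univ.erase i0, (a i : ℤ) * v i c := by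
        refine Finset.dvd_sum fun j hj => ?_
        have hj' : j ≠ i0 := (Finset.mem_erase.1 hj).1
        rw [hothers j hj']
        exact Dvd.intro _ rfl
      rw [heq]
      exact dvd_neg.mpr hdvdsum
    have : A ∣ Finset.univ.gcd (fun j => (v i0 j).natAbs) := by
      refine Finset.dvd_gcd fun c _ => ?_
      have := Int.natAbs_dvd_natAbs.mpr (hdvdcoord c)
      simpa using this
    rw [hprim i0] at this
    exact Nat.dvd_one.mp this
end

section
/- Let n ≥ 1 and let w_1, …, w_n ∈ ℤ^n be linearly independent over ℚ. Let A be the subgroup of ℤ^n generated by w_1, …, w_{n−1}, let M = span_ℚ{w_1, …, w_{n−1}} ∩ ℤ^n be its saturation, and let B be the subgroup of ℤ^n generated by w_1, …, w_n. Then the index [M : A] is finite and divides the (finite) index [ℤ^n : B]. -/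
/-!
The subgroup `B` meets the saturation `M` exactly in `A`: an element of `B` splits as `a + b` with
`a ∈ A` and `b` an integer multiple of `w (n-1)`, and by linear independence `b` can lie in the
`ℚ`-span of the other generators only if `b = 0`. Hence `[M : A] = [M : B ⊓ M]`, which divides
`[ℤⁿ : B]`; the latter is finite since `B` has full rank `n`.
-/

open Submodule

theorem Submodule.map_mem_span_image_of_mem_span {R K M V : Type*} [Semiring R] [Semiring K]
    [SMul R K] [AddCommMonoid M] [Module R M] [AddCommMonoid V] [Module K V] [Module R V]
    [IsScalarTower R K V] (φ : M →ₗ[R] V) {t : Set M} {y : M} (hy : y ∈ span R t) :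
    φ y ∈ span K (φ '' t) :=
  span_le_restrictScalars R K _ <| by
    rw [span_image]
    exact mem_map_of_mem hy

theorem LinearIndependent.mem_span_image_of_map_mem_span_image
    {ι R K M V : Type*} [Ring R] [Ring K] [SMul R K] [AddCommGroup M] [Module R M]
    [AddCommGroup V] [Module K V] [Module R V] [IsScalarTower R K V]
    {φ : M →ₗ[R] V} (hφ : Function.Injective φ) {v : ι → M}
    (hv : LinearIndependent K (φ ∘ v)) {s : Set ι} {x : M}
    (hx : x ∈ span R (Set.range v)) (hφx : φ x ∈ span K (φ '' (v '' s))) :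
    x ∈ span R (v '' s) := by
  rw [← Set.image_union_image_compl_eq_range (s := s), span_union] at hx
  obtain ⟨a, ha, b, hb, rfl⟩ := mem_sup.mp hx
  have hφb : φ b = 0 := by
    refine disjoint_def.mp (hv.disjoint_span_image (disjoint_compl_right (a := s))) _ ?_ ?_
    · rw [Set.image_comp]
      simpa using sub_mem hφx (map_mem_span_image_of_mem_span (K := K) φ ha)
    · rw [Set.image_comp]
      exact map_mem_span_image_of_mem_span φ hb
  rwa [(map_eq_zero_iff φ hφ).mp hφb, add_zero]

theorem Submodule.finite_quotient_of_finrank_eq {M : Type*} [AddCommGroup M] [Module.Finite ℤ M]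
    {N : Submodule ℤ M} (h : Module.finrank ℤ N = Module.finrank ℤ M) : Finite (M ⧸ N) := by
  have hq : Module.finrank ℤ (M ⧸ N) = 0 := by
    have := N.finrank_quotient_add_finrank
    omega
  exact Module.finite_of_fg_torsion _ (Module.finrank_eq_zero_iff_isTorsion.mp hq)

theorem mult_facet_divides_mult_cone_general (n : ℕ)
    (w : Fin n → (Fin n → ℤ))
    (hindep : LinearIndependent ℚ (fun i => fun j => ((w i j : ℚ))))
    (A B M : AddSubgroup (Fin n → ℤ))
    (hA : A = AddSubgroup.closure (w '' {i : Fin n | (i : ℕ) < n - 1}))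
    (hB : B = AddSubgroup.closure (Set.range w))
    (hM : ∀ x : Fin n → ℤ, x ∈ M ↔
      (fun j => (x j : ℚ)) ∈ Submodule.span ℚ
        ((fun y : Fin n → ℤ => fun j => ((y j : ℚ))) '' (w '' {i : Fin n | (i : ℕ) < n - 1}))) :
    A.relIndex M ≠ 0 ∧ B.index ≠ 0 ∧ A.relIndex M ∣ B.index := by
  set s := {i : Fin n | (i : ℕ) < n - 1}
  let φ := (Algebra.linearMap ℤ ℚ).compLeft (Fin n)
  have hφ : Function.Injective φ := fun x y h => funext fun j => Int.cast_injective (congrFun h j)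
  have hv : LinearIndependent ℚ (φ ∘ w) := hindep
  replace hM : ∀ x, x ∈ M ↔ φ x ∈ span ℚ (φ '' (w '' s)) := hM
  rw [← span_int_eq_addSubgroupClosure] at hA hB
  subst hA hB
  have hAM : (span ℤ (w '' s)).toAddSubgroup ≤ M := fun x hx =>
    (hM x).mpr (map_mem_span_image_of_mem_span φ hx)
  have hBM : (span ℤ (Set.range w)).toAddSubgroup ⊓ M = (span ℤ (w '' s)).toAddSubgroup :=
    le_antisymm (fun x hx => hv.mem_span_image_of_map_mem_span_image hφ hx.1 ((hM x).mp hx.2))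
      (le_inf (span_mono (Set.image_subset_range w s)) hAM)
  have hBidx : (span ℤ (Set.range w)).toAddSubgroup.index ≠ 0 := by
    have : Finite ((Fin n → ℤ) ⧸ span ℤ (Set.range w)) := by
      refine finite_quotient_of_finrank_eq ?_
      rw [finrank_span_eq_card ((hv.restrict_scalars' ℤ).of_comp φ), Module.finrank_fin_fun,
        Fintype.card_fin]
    exact AddSubgroup.index_ne_zero_of_finite (hH := this)
  have hdvd : (span ℤ (w '' s)).toAddSubgroup.relIndex M ∣
      (span ℤ (Set.range w)).toAddSubgroup.index := by
    rw [← hBM, AddSubgroup.inf_relIndex_right]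
    exact AddSubgroup.relIndex_dvd_index_of_normal _ M
  exact ⟨ne_zero_of_dvd_ne_zero hBidx hdvd, hBidx, hdvd⟩

/-- Let `w 0, …, w (n-1) ∈ ℤⁿ` be linearly independent over `ℚ`. Let `A` be the
subgroup of `ℤⁿ` generated by the first `n - 1` of them, `M` its saturation
(the intersection of their ℚ-span with `ℤⁿ`), and `B` the subgroup generated by
all `n` of them. Then the index `[M : A]` is finite and divides the finite index
`[ℤⁿ : B]`. -/
theorem mult_facet_divides_mult_cone (n : ℕ) (hn : 1 ≤ n)
    (w : Fin n → (Fin n → ℤ))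
    (hindep : LinearIndependent ℚ (fun i => fun j => ((w i j : ℚ))))
    (A B M : AddSubgroup (Fin n → ℤ))
    (hA : A = AddSubgroup.closure (w '' {i : Fin n | (i : ℕ) < n - 1}))
    (hB : B = AddSubgroup.closure (Set.range w))
    (hM : ∀ x : Fin n → ℤ, x ∈ M ↔
      (fun j => (x j : ℚ)) ∈ Submodule.span ℚ
        ((fun y : Fin n → ℤ => fun j => ((y j : ℚ))) '' (w '' {i : Fin n | (i : ℕ) < n - 1}))) :
    A.relIndex M ≠ 0 ∧ B.index ≠ 0 ∧ A.relIndex M ∣ B.index :=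
  mult_facet_divides_mult_cone_general n w hindep A B M hA hB hM
end
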